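/- For every integer b ≥ 1 and all integers g₁, …, g_b ≥ 0 there exists a connected open Feynman graph L of the φ₃⁴-theory whose boundary graph ∂L has exactly b connected components, the i-th component being isomorphic, as a vertex-bipartite edge-3-colored graph, to the canonical genus-g_i graph C_{g_i}. (This is the combinatorial content of the theorem that every closed orientable, possibly disconnected, surface is the boundary of a 3-dimensional space triangulated by a connected Feynman graph of the φ₃⁴-theory; in particular any two closed orientable surfaces are cobordant via such a graph.) -/

import Mathlib

/-!  Open colored graphs. -/

/-- An open `(D+1)`-colored graph with colors `{0,1,…,D}`: finite sets `W` (white) and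
`B` (black) of vertices, bijections `σ c : W ≃ B` for the colors `c = 1,…,D` (indexed by
`Fin D`), and color-0 data: subsets `W₀ ⊆ W` and `B₀ ⊆ B` and a map `σ₀` which (for a
proper graph, see `OGraph.IsProper`) restricts to a bijection from `W₀` onto `B₀`; the
color-0 edges are the pairs `(w, σ₀ w)` with `w ∈ W₀`.  The vertices outside `W₀ ∪ B₀`
are the external vertices. -/
structure OGraph (D : ℕ) where
  W : Type
  B : Type
  finW : Finite W
  finB : Finite B
  σ : Fin D → W ≃ B
  W₀ : Set W
  B₀ : Set B
  σ₀ : W → B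

namespace OGraph

variable {D : ℕ}

/-- The color-0 data is a bijection from `W₀` onto `B₀`. -/
def IsProper (G : OGraph D) : Prop := Set.BijOn G.σ₀ G.W₀ G.B₀

/-- A closed graph is an open graph with no external vertices. -/
def IsClosed (G : OGraph D) : Prop := G.W₀ = Set.univ ∧ G.B₀ = Set.univ

/-- One step along a (0c)-bicolored path: from the white vertex `w` walk along the
color-`c` edge to `σ_c w` and then back along a color-0 edge to the white vertex `w'`. -/
def Step (G : OGraph D) (c : Fin D) (w w' : G.W) : Prop :=
  w' ∈ G.W₀ ∧ G.σ c w ∈ G.B₀ ∧ G.σ₀ w' = G.σ c w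

/-- Boundary adjacency (the color-`c` edges of the boundary graph `∂G`): the external
vertices `w` and `b` are the two endpoints of a maximal (0c)-bicolored path of `G`. -/
def BdryAdj (G : OGraph D) (c : Fin D) (w : G.W) (b : G.B) : Prop :=
  w ∉ G.W₀ ∧ b ∉ G.B₀ ∧
    ∃ w' : G.W, Relation.ReflTransGen (G.Step c) w w' ∧ G.σ c w' = b

/-- Adjacency of vertices of an open colored graph (an edge of any color joins them). -/
def Adj (G : OGraph D) : G.W ⊕ G.B → G.W ⊕ G.B → Prop
  | Sum.inl w, Sum.inr b => (∃ c, G.σ c w = b) ∨ (w ∈ G.W₀ ∧ G.σ₀ w = b)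
  | Sum.inr b, Sum.inl w => (∃ c, G.σ c w = b) ∨ (w ∈ G.W₀ ∧ G.σ₀ w = b)
  | Sum.inl _, Sum.inl _ => False
  | Sum.inr _, Sum.inr _ => False

/-- A graph is connected if any two of its vertices are joined by a path of edges. -/
def Connected (G : OGraph D) : Prop :=
  ∀ x y : G.W ⊕ G.B, Relation.ReflTransGen G.Adj x y

/-- An open 4-colored graph (colors `{0,1,2,3}`; the colors `1,2,3` are indexed by
`Fin 3`) is a Feynman graph of the φ₃⁴-theory iff every connected component of the
3-colored graph obtained by deleting all color-0 edges is one of the quartic vertices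
`V₁, V₂, V₃`: the white vertices pair up, `w` with a partner `w' ≠ w`, so that for some
color `i` the two edges at `w` of the colors `j ≠ i` end at the same black vertex as the
color-`i` edge of `w'`, and vice versa. -/
def Phi34 (G : OGraph 3) : Prop :=
  ∀ w : G.W, ∃ i : Fin 3, ∃ w' : G.W, w' ≠ w ∧
    (∀ j : Fin 3, j ≠ i → G.σ j w = G.σ i w') ∧
    (∀ j : Fin 3, j ≠ i → G.σ j w' = G.σ i w)

/-- Connected sum of two open `(D+1)`-colored graphs along the color-0 edges
`(wg, σ₀ wg)` of `G` and `(wh, σ₀ wh)` of `H`: delete the two edges and add the color-0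
edges `(wg, H.σ₀ wh)` and `(wh, G.σ₀ wg)`; all other edges are kept. -/
noncomputable def connSum0 (G H : OGraph D) (wg : G.W) (wh : H.W) : OGraph D where
  W := G.W ⊕ H.W
  B := G.B ⊕ H.B
  finW := by haveI := G.finW; haveI := H.finW; exact inferInstance
  finB := by haveI := G.finB; haveI := H.finB; exact inferInstance
  σ := fun c => (G.σ c).sumCongr (H.σ c)
  W₀ := Sum.inl '' G.W₀ ∪ Sum.inr '' H.W₀
  B₀ := Sum.inl '' G.B₀ ∪ Sum.inr '' H.B₀
  σ₀ := fun x =>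
    letI : DecidableEq (G.W ⊕ H.W) := Classical.decEq _
    if x = Sum.inl wg then Sum.inr (H.σ₀ wh)
    else if x = Sum.inr wh then Sum.inl (G.σ₀ wg)
    else Sum.map G.σ₀ H.σ₀ x

end OGraph

/-- The color-`c` bijection (white `i` ↦ black vertex) of the canonical genus-`g`
graph `C_g`: its vertices are indexed by `ℤ/(2g+1)`, the color-1 edges are `w_i b_i`,
the color-2 edges are `w_i b_{i−1}`, and the color-3 edges are `w_i b_{i+g}`
(colors `1,2,3` indexed by `Fin 3` as `0 ↦ 1`, `1 ↦ 2`, `2 ↦ 3`). -/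
def canonicalσ (g : ℕ) (c : Fin 3) : ZMod (2 * g + 1) ≃ ZMod (2 * g + 1) :=
  if c = 0 then Equiv.refl _
  else if c = 1 then Equiv.subRight (1 : ZMod (2 * g + 1))
  else Equiv.addRight (g : ZMod (2 * g + 1))

/-!
The filling graph is written down explicitly. Its component `i` (with `n = 2 gᵢ + 1`) has, on
each side, the vertices `(l, k)` for `l : Fin 4` and `k : ZMod n`, forming the quartic vertices
`{(0, k), (1, k)}` and `{(2, k), (3, k)}`, and a quartic vertex `{hub, link} = {.inr 0, .inr 1}`;
the external vertices are the `(0, k)`. The color-0 edges join the white `(2, k)` to the black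
`(1, k)`, the white `(3, k)` to the black `(2, k - g - 1)` and the white `(1, k)` to the black
`(3, k + 1)`, so that the maximal bicolored paths leaving the white `(0, k)` end at the black
`(0, k)`, `(0, k - 1)` and `(0, k + g)`, which are its neighbours in `C_g`. The edge from `(1, 0)`
to `(3, 1)` is routed through the hub, which the last two colors cross straight, and the links
of consecutive components are joined by color-0 edges: this connects the graph without changing
its boundary. Since a proper graph has at most one way to continue a bicolored path, exhibiting
one path from each external vertex to an external vertex computes the boundary.
-/

open Relation

theorem Relation.reflTransGen_zero_add_one {M : Type*} [AddMonoidWithOne M]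
    (hM : Function.Surjective (Nat.cast : ℕ → M)) (m : M) :
    ReflTransGen (fun x y : M => y = x + 1) 0 m := by
  obtain ⟨j, rfl⟩ := hM m
  induction j with
  | zero => rw [Nat.cast_zero]
  | succ j ih => exact ih.tail (Nat.cast_succ j)

namespace OGraph

variable {D : ℕ} (G : OGraph D)

instance : Std.Symm G.Adj := ⟨by rintro (_ | _) (_ | _) h <;> exact h⟩

theorem adj_of_σ_eq (c : Fin D) {w : G.W} {v : G.B} (h : G.σ c w = v) :
    G.Adj (.inl w) (.inr v) :=
  Or.inl ⟨c, h⟩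

theorem adj_of_σ₀_eq {w : G.W} {v : G.B} (hw : w ∈ G.W₀) (h : G.σ₀ w = v) :
    G.Adj (.inl w) (.inr v) :=
  Or.inr ⟨hw, h⟩

theorem reflTransGen_inl_of_adj {w w' : G.W} {v : G.B} (h : G.Adj (.inl w) (.inr v))
    (h' : G.Adj (.inl w') (.inr v)) : ReflTransGen G.Adj (.inl w) (.inl w') :=
  .tail (.single h) (symm h')

theorem connected_of_reflTransGen_inl (c : Fin D)
    (h : ∀ w w' : G.W, ReflTransGen G.Adj (.inl w) (.inl w')) : G.Connected := by
  have white : ∀ x, ∃ w, ReflTransGen G.Adj (.inl w) x := by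
    rintro (w | v)
    · exact ⟨w, .refl⟩
    · exact ⟨(G.σ c).symm v, .single (G.adj_of_σ_eq c (Equiv.apply_symm_apply _ v))⟩
  intro x y
  obtain ⟨w, hw⟩ := white x
  obtain ⟨w', hw'⟩ := white y
  exact (symm hw).trans ((h w w').trans hw')

theorem IsProper.step_rightUnique {G : OGraph D} (hG : G.IsProper) (c : Fin D) :
    Relator.RightUnique (G.Step c) :=
  fun _ _ _ ⟨hx, _, hx'⟩ ⟨hy, _, hy'⟩ => hG.injOn hx hy (hx'.trans hy'.symm)

theorem IsProper.bdryAdj_iff {G : OGraph D} (hG : G.IsProper) {c : Fin D} {w w' : G.W}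
    {v : G.B} (hw : w ∉ G.W₀) (hv : v ∉ G.B₀) (hpath : ReflTransGen (G.Step c) w w')
    (hend : G.σ c w' ∉ G.B₀) : G.BdryAdj c w v ↔ v = G.σ c w' := by
  refine ⟨fun ⟨_, _, u, hu, hu_end⟩ => ?_, fun h => ⟨hw, hv, w', hpath, h.symm⟩⟩
  have eq_of_terminal : ∀ {x y}, G.σ c x ∉ G.B₀ → ReflTransGen (G.Step c) x y → x = y :=
    fun hx hxy => (hxy.cases_head).resolve_right fun ⟨_, hstep, _⟩ => hx hstep.2.1
  rcases hu.total_of_right_unique (hG.step_rightUnique c) hpath with h | h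
  · rw [← hu_end, eq_of_terminal (hu_end ▸ hv) h]
  · rw [← hu_end, eq_of_terminal hend h]

end OGraph

/-- The condition `OGraph.Phi34` for a graph with `W = B = α` and color bijections `π`. -/
def IsQuartic {α : Type*} (π : Fin 3 → Equiv.Perm α) : Prop :=
  ∀ x, ∃ i : Fin 3, ∃ x', x' ≠ x ∧
    (∀ j, j ≠ i → π j x = π i x') ∧ (∀ j, j ≠ i → π j x' = π i x)

namespace IsQuartic

theorem sigmaCongrRight {ι : Type*} {α : ι → Type*} {π : Fin 3 → ∀ i, Equiv.Perm (α i)}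
    (h : ∀ i, IsQuartic (π · i)) : IsQuartic fun c => Equiv.sigmaCongrRight (π c) := by
  rintro ⟨i, x⟩
  obtain ⟨c, x', hne, hx, hx'⟩ := h i x
  exact ⟨c, ⟨i, x'⟩, fun h => hne (sigma_mk_injective h),
    fun j hj => congrArg (Sigma.mk i) (hx j hj), fun j hj => congrArg (Sigma.mk i) (hx' j hj)⟩

theorem sumCongr {α β : Type*} {π : Fin 3 → Equiv.Perm α} {ρ : Fin 3 → Equiv.Perm β}
    (hπ : IsQuartic π) (hρ : IsQuartic ρ) :
    IsQuartic fun c => Equiv.sumCongr (π c) (ρ c) := by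
  rintro (x | y)
  · obtain ⟨c, x', hne, hx, hx'⟩ := hπ x
    exact ⟨c, .inl x', fun h => hne (Sum.inl_injective h),
      fun j hj => congrArg Sum.inl (hx j hj), fun j hj => congrArg Sum.inl (hx' j hj)⟩
  · obtain ⟨c, y', hne, hy, hy'⟩ := hρ y
    exact ⟨c, .inr y', fun h => hne (Sum.inr_injective h),
      fun j hj => congrArg Sum.inr (hy j hj), fun j hj => congrArg Sum.inr (hy' j hj)⟩

theorem prodCongr_refl {α β : Type*} {π : Fin 3 → Equiv.Perm α} (hπ : IsQuartic π) :
    IsQuartic fun c => Equiv.prodCongr (π c) (Equiv.refl β) := by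
  rintro ⟨x, y⟩
  obtain ⟨c, x', hne, hx, hx'⟩ := hπ x
  exact ⟨c, (x', y), fun h => hne (congrArg Prod.fst h),
    fun j hj => congrArg (·, y) (hx j hj), fun j hj => congrArg (·, y) (hx' j hj)⟩

end IsQuartic

namespace Filling

def color4 : Fin 3 → Equiv.Perm (Fin 4)
  | 0 => 1
  | 1 => Equiv.swap 0 1 * Equiv.swap 2 3
  | 2 => Equiv.swap 0 1

def color2 : Fin 3 → Equiv.Perm (Fin 2)
  | 0 => Equiv.swap 0 1
  | _ => 1

theorem isQuartic_color4 : IsQuartic color4 := by unfold IsQuartic; decide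

theorem isQuartic_color2 : IsQuartic color2 := by unfold IsQuartic; decide

variable {b : ℕ} (g : Fin b → ℕ)

abbrev Vertex : Type := Σ i : Fin b, (Fin 4 × ZMod (2 * g i + 1)) ⊕ Fin 2

def color (c : Fin 3) : Equiv.Perm (Vertex g) :=
  Equiv.sigmaCongrRight fun _ =>
    Equiv.sumCongr (Equiv.prodCongr (color4 c) (Equiv.refl _)) (color2 c)

theorem isQuartic_color : IsQuartic (color g) :=
  .sigmaCongrRight fun _ => isQuartic_color4.prodCongr_refl.sumCongr isQuartic_color2

theorem fin4_cases (l : Fin 4) : l = 0 ∨ l = 1 ∨ l = 2 ∨ l = 3 := by decide +revert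

theorem fin2_cases (t : Fin 2) : t = 0 ∨ t = 1 := by decide +revert

def colorZeroFun : Vertex g → Vertex g
  | ⟨i, .inl (0, k)⟩ => ⟨i, .inl (0, k)⟩
  | ⟨i, .inl (1, k)⟩ => if k = 0 then ⟨i, .inr 0⟩ else ⟨i, .inl (3, k + 1)⟩
  | ⟨i, .inl (2, k)⟩ => ⟨i, .inl (1, k)⟩
  | ⟨i, .inl (3, k)⟩ => ⟨i, .inl (2, k - g i - 1)⟩
  | ⟨i, .inr 0⟩ => ⟨i, .inl (3, 1)⟩
  | ⟨i, .inr 1⟩ => ⟨finRotate b i, .inr 1⟩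

def colorZeroInv : Vertex g → Vertex g
  | ⟨i, .inl (0, k)⟩ => ⟨i, .inl (0, k)⟩
  | ⟨i, .inl (1, k)⟩ => ⟨i, .inl (2, k)⟩
  | ⟨i, .inl (2, k)⟩ => ⟨i, .inl (3, k + g i + 1)⟩
  | ⟨i, .inl (3, k)⟩ => if k = 1 then ⟨i, .inr 0⟩ else ⟨i, .inl (1, k - 1)⟩
  | ⟨i, .inr 0⟩ => ⟨i, .inl (1, 0)⟩
  | ⟨i, .inr 1⟩ => ⟨(finRotate b).symm i, .inr 1⟩

def colorZero : Equiv.Perm (Vertex g) where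
  toFun := colorZeroFun g
  invFun := colorZeroInv g
  left_inv := by
    rintro ⟨i, ⟨l, k⟩ | t⟩
    · rcases fin4_cases l with rfl | rfl | rfl | rfl
      · rfl
      · by_cases hk : k = 0 <;> simp [colorZeroFun, colorZeroInv, hk]
      · rfl
      · simp only [colorZeroFun, colorZeroInv]
        ring_nf
    · rcases fin2_cases t with rfl | rfl
      · simp [colorZeroFun, colorZeroInv]
      · exact congrArg (⟨·, .inr 1⟩ : Fin b → Vertex g) ((finRotate b).symm_apply_apply i)
  right_inv := by
    rintro ⟨i, ⟨l, k⟩ | t⟩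
    · rcases fin4_cases l with rfl | rfl | rfl | rfl
      · rfl
      · rfl
      · simp only [colorZeroFun, colorZeroInv]
        ring_nf
      · by_cases hk : k = 1 <;> simp [colorZeroFun, colorZeroInv, hk, sub_eq_zero]
    · rcases fin2_cases t with rfl | rfl
      · simp [colorZeroFun, colorZeroInv]
      · exact congrArg (⟨·, .inr 1⟩ : Fin b → Vertex g) ((finRotate b).apply_symm_apply i)

theorem colorZero_apply (x : Vertex g) : colorZero g x = colorZeroFun g x := rfl

def boundaryVertex (p : Σ i, ZMod (2 * g i + 1)) : Vertex g := ⟨p.1, .inl (0, p.2)⟩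

theorem boundaryVertex_injective : Function.Injective (boundaryVertex g) := by
  rintro ⟨i, k⟩ ⟨j, m⟩ h
  simp only [boundaryVertex, Sigma.mk.inj_iff] at h
  obtain ⟨rfl, h⟩ := h
  simpa using h

theorem inl_notMem_range {i : Fin b} {l : Fin 4} (hl : l ≠ 0) (k : ZMod (2 * g i + 1)) :
    (⟨i, .inl (l, k)⟩ : Vertex g) ∉ Set.range (boundaryVertex g) := by
  rintro ⟨⟨j, m⟩, h⟩
  simp only [boundaryVertex, Sigma.mk.inj_iff] at h
  obtain ⟨rfl, h⟩ := h
  simp only [heq_eq_eq, Sum.inl.injEq, Prod.mk.injEq] at h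
  exact hl h.1.symm

theorem inr_notMem_range (i : Fin b) (t : Fin 2) :
    (⟨i, .inr t⟩ : Vertex g) ∉ Set.range (boundaryVertex g) := by
  rintro ⟨⟨j, m⟩, h⟩
  simp only [boundaryVertex, Sigma.mk.inj_iff] at h
  obtain ⟨rfl, h⟩ := h
  simp at h

theorem colorZero_boundaryVertex (p : Σ i, ZMod (2 * g i + 1)) :
    colorZero g (boundaryVertex g p) = boundaryVertex g p := by
  simp [colorZero_apply, colorZeroFun, boundaryVertex]

def graph : OGraph 3 where
  W := Vertex g
  B := Vertex g
  finW := inferInstance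
  finB := inferInstance
  σ := color g
  W₀ := (Set.range (boundaryVertex g))ᶜ
  B₀ := (Set.range (boundaryVertex g))ᶜ
  σ₀ := colorZero g

theorem graph_isProper : (graph g).IsProper := by
  refine (colorZero g).bijOn fun x =>
    not_congr ⟨fun ⟨p, hp⟩ => ⟨p, ?_⟩, fun ⟨p, hp⟩ => ⟨p, ?_⟩⟩
  · apply (colorZero g).injective
    rw [colorZero_boundaryVertex, hp]
  · rw [← hp, colorZero_boundaryVertex]

theorem graph_phi34 : (graph g).Phi34 := isQuartic_color g

theorem graph_step_iff {c : Fin 3} {w w' : Vertex g} :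
    (graph g).Step c w w' ↔ w' ∉ Set.range (boundaryVertex g) ∧
      color g c w ∉ Set.range (boundaryVertex g) ∧ colorZero g w' = color g c w :=
  Iff.rfl

theorem color_hub {c : Fin 3} (hc : c ≠ 0) (i : Fin b) :
    color g c ⟨i, .inr 0⟩ = ⟨i, .inr 0⟩ := by
  fin_cases c
  exacts [absurd rfl hc, rfl, rfl]

theorem reflTransGen_step_node_one {c : Fin 3} (hc : c ≠ 0) {w : Vertex g} {i : Fin b}
    {k : ZMod (2 * g i + 1)} (hw : color g c w = ⟨i, .inl (3, k + 1)⟩) :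
    ReflTransGen ((graph g).Step c) w ⟨i, .inl (1, k)⟩ := by
  have hmem : color g c w ∉ Set.range (boundaryVertex g) :=
    hw ▸ inl_notMem_range g (by decide) _
  by_cases hk : k = 0
  · subst hk
    have hub : (graph g).Step c w ⟨i, .inr 0⟩ :=
      (graph_step_iff g).2 ⟨inr_notMem_range g i 0, hmem, by rw [hw, zero_add]; rfl⟩
    refine .tail (.single hub)
      ((graph_step_iff g).2 ⟨inl_notMem_range g (by decide) 0, ?_, ?_⟩)
    · rw [color_hub g hc]
      exact inr_notMem_range g i 0
    · rw [color_hub g hc]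
      simp [colorZero_apply, colorZeroFun]
  · exact .single ((graph_step_iff g).2 ⟨inl_notMem_range g (by decide) k, hmem, by
      rw [hw]; simp [colorZero_apply, colorZeroFun, hk]⟩)

theorem exists_boundary_path (c : Fin 3) (p : Σ i, ZMod (2 * g i + 1)) :
    ∃ w', ReflTransGen ((graph g).Step c) (boundaryVertex g p) w' ∧
      color g c w' = boundaryVertex g ⟨p.1, canonicalσ (g p.1) c p.2⟩ := by
  obtain ⟨i, k⟩ := p
  have enter (hc : c ≠ 0) :
      (graph g).Step c (boundaryVertex g ⟨i, k⟩) ⟨i, .inl (2, k)⟩ := by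
    refine (graph_step_iff g).2 ⟨inl_notMem_range g (by decide) k, ?_⟩
    fin_cases c
    exacts [absurd rfl hc, ⟨inl_notMem_range g (by decide) k, rfl⟩,
      ⟨inl_notMem_range g (by decide) k, rfl⟩]
  fin_cases c
  · exact ⟨_, .refl, by simp [canonicalσ]; rfl⟩
  · refine ⟨⟨i, .inl (1, k - 1)⟩, .head (enter (by decide)) ?_, by simp [canonicalσ]; rfl⟩
    exact reflTransGen_step_node_one g (by decide) (by rw [sub_add_cancel]; rfl)
  · have hq : (graph g).Step 2 ⟨i, .inl (2, k)⟩ ⟨i, .inl (3, k + g i + 1)⟩ :=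
      (graph_step_iff g).2 ⟨inl_notMem_range g (by decide) _, inl_notMem_range g (by decide) k,
        by rw [colorZero_apply, colorZeroFun, show k + g i + 1 - g i - 1 = k by ring]; rfl⟩
    refine ⟨⟨i, .inl (1, k + g i)⟩, .head (enter (by decide)) (.head hq ?_),
      by simp [canonicalσ]; rfl⟩
    exact reflTransGen_step_node_one g (by decide) rfl

noncomputable def boundaryEquiv :
    {x : Vertex g // x ∉ (Set.range (boundaryVertex g))ᶜ} ≃ Σ i, ZMod (2 * g i + 1) :=
  (Equiv.subtypeEquivRight fun _ => Set.notMem_compl_iff).trans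
    (Equiv.ofInjective _ (boundaryVertex_injective g)).symm

theorem graph_bdryAdj_iff (c : Fin 3) (w : {w : (graph g).W // w ∉ (graph g).W₀})
    (v : {v : (graph g).B // v ∉ (graph g).B₀}) :
    (graph g).BdryAdj c w.1 v.1 ↔
      boundaryEquiv g v = ⟨(boundaryEquiv g w).1,
        canonicalσ (g (boundaryEquiv g w).1) c (boundaryEquiv g w).2⟩ := by
  obtain ⟨p, rfl⟩ := (boundaryEquiv g).symm.surjective w
  obtain ⟨q, rfl⟩ := (boundaryEquiv g).symm.surjective v
  obtain ⟨w', hpath, hend⟩ := exists_boundary_path g c p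
  have hext (r : Σ i, ZMod (2 * g i + 1)) : boundaryVertex g r ∉ (graph g).W₀ :=
    not_not.2 (Set.mem_range_self r)
  rw [Equiv.apply_symm_apply, Equiv.apply_symm_apply]
  change (graph g).BdryAdj c (boundaryVertex g p) (boundaryVertex g q) ↔ _
  rw [(graph_isProper g).bdryAdj_iff (hext p) (hext q) hpath (hend ▸ hext _)]
  change boundaryVertex g q = color g c w' ↔ _
  rw [hend, (boundaryVertex_injective g).eq_iff]

abbrev Joined (w w' : Vertex g) : Prop := ReflTransGen (graph g).Adj (.inl w) (.inl w')

instance : IsTrans (Vertex g) (Joined g) := ⟨fun _ _ _ => ReflTransGen.trans⟩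

instance : Std.Symm (Joined g) := ⟨fun _ _ h => symm (r := ReflTransGen (graph g).Adj) h⟩

theorem joined_of_color_eq {w w' : Vertex g} (c c' : Fin 3) (h : color g c w = color g c' w') :
    Joined g w w' :=
  (graph g).reflTransGen_inl_of_adj ((graph g).adj_of_σ_eq c rfl)
    ((graph g).adj_of_σ_eq c' h.symm)

theorem joined_of_colorZero_eq {w w' : Vertex g} (hw : w ∉ Set.range (boundaryVertex g))
    (c : Fin 3) (h : colorZero g w = color g c w') : Joined g w w' :=
  (graph g).reflTransGen_inl_of_adj ((graph g).adj_of_σ₀_eq hw rfl)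
    ((graph g).adj_of_σ_eq c h.symm)

theorem joined_node_one_add_one (i : Fin b) (k : ZMod (2 * g i + 1)) :
    Joined g ⟨i, .inl (1, k)⟩ ⟨i, .inl (1, k + 1)⟩ := by
  have to_node_three : Joined g ⟨i, .inl (1, k)⟩ ⟨i, .inl (3, k + 1)⟩ := by
    by_cases hk : k = 0
    · subst hk
      calc Joined g ⟨i, .inl (1, 0)⟩ ⟨i, .inr 0⟩ :=
            joined_of_colorZero_eq g (inl_notMem_range g (by decide) 0) 1
              (by simp [colorZero_apply, colorZeroFun]; rfl)
        Joined g _ ⟨i, .inl (3, 0 + 1)⟩ :=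
            joined_of_colorZero_eq g (inr_notMem_range g i 0) 0 (by rw [zero_add]; rfl)
    · exact joined_of_colorZero_eq g (inl_notMem_range g (by decide) k) 0
        (by simp [colorZero_apply, colorZeroFun, hk]; rfl)
  calc Joined g ⟨i, .inl (1, k)⟩ ⟨i, .inl (3, k + 1)⟩ := to_node_three
    Joined g _ ⟨i, .inl (2, k + 1)⟩ := joined_of_color_eq g 0 1 rfl
    Joined g _ ⟨i, .inl (1, k + 1)⟩ :=
      joined_of_colorZero_eq g (inl_notMem_range g (by decide) _) 0 rfl

theorem joined_component (i : Fin b) (x : (Fin 4 × ZMod (2 * g i + 1)) ⊕ Fin 2) :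
    Joined g ⟨i, .inl (1, 0)⟩ ⟨i, x⟩ := by
  have node_one (k : ZMod (2 * g i + 1)) : Joined g ⟨i, .inl (1, 0)⟩ ⟨i, .inl (1, k)⟩ :=
    (reflTransGen_zero_add_one ZMod.natCast_zmod_surjective k).lift'
      (fun k => (.inl ⟨i, .inl (1, k)⟩ : (graph g).W ⊕ (graph g).B))
      (by rintro m _ rfl; exact joined_node_one_add_one g i m)
  have hub : Joined g ⟨i, .inl (1, 0)⟩ ⟨i, .inr 0⟩ :=
    joined_of_colorZero_eq g (inl_notMem_range g (by decide) 0) 1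
      (by simp [colorZero_apply, colorZeroFun]; rfl)
  have node_two {k : ZMod (2 * g i + 1)} : Joined g ⟨i, .inl (1, k)⟩ ⟨i, .inl (2, k)⟩ :=
    symm (joined_of_colorZero_eq g (inl_notMem_range g (by decide) k) 0 rfl)
  rcases x with ⟨l, k⟩ | t
  · rcases fin4_cases l with rfl | rfl | rfl | rfl
    · exact (node_one k).trans (joined_of_color_eq g 0 1 rfl)
    · exact node_one k
    · exact (node_one k).trans node_two
    · exact ((node_one k).trans node_two).trans (joined_of_color_eq g 1 0 rfl)
  · rcases fin2_cases t with rfl | rfl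
    · exact hub
    · exact hub.trans (joined_of_color_eq g 1 0 rfl)

theorem joined_component_finRotate (i : Fin b) :
    Joined g ⟨i, .inl (1, 0)⟩ ⟨finRotate b i, .inl (1, 0)⟩ :=
  calc Joined g ⟨i, .inl (1, 0)⟩ ⟨i, .inr 1⟩ := joined_component g i (.inr 1)
    Joined g _ ⟨finRotate b i, .inr 1⟩ :=
      joined_of_colorZero_eq g (inr_notMem_range g i 1) 1 rfl
    Joined g _ ⟨finRotate b i, .inl (1, 0)⟩ := symm (joined_component g _ (.inr 1))

open Fin.NatCast in
theorem graph_connected : (graph g).Connected := by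
  refine (graph g).connected_of_reflTransGen_inl 0 fun ⟨i, x⟩ ⟨j, y⟩ => ?_
  have := i.neZero
  have base (j : Fin b) : Joined g ⟨0, .inl (1, 0)⟩ ⟨j, .inl (1, 0)⟩ :=
    (reflTransGen_zero_add_one (fun a : Fin b => ⟨a.val, Fin.cast_val_eq_self a⟩) j).lift'
      (fun j => (.inl ⟨j, .inl (1, 0)⟩ : (graph g).W ⊕ (graph g).B))
      (by rintro m _ rfl; have := joined_component_finRotate g m; rwa [finRotate_apply] at this)
  exact (symm (joined_component g i x)).trans <|
    (symm (base i)).trans ((base j).trans (joined_component g j y))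

end Filling

theorem phi34_boundary_sector_complete_general (b : ℕ) (g : Fin b → ℕ) :
    ∃ L : OGraph 3, L.IsProper ∧ L.Phi34 ∧ L.Connected ∧
      ∃ (eW : {w : L.W // w ∉ L.W₀} ≃ Σ i : Fin b, ZMod (2 * g i + 1))
        (eB : {v : L.B // v ∉ L.B₀} ≃ Σ i : Fin b, ZMod (2 * g i + 1)),
        ∀ (c : Fin 3) (w : {w : L.W // w ∉ L.W₀}) (v : {v : L.B // v ∉ L.B₀}),
          L.BdryAdj c w.1 v.1 ↔
            eB v = ⟨(eW w).1, canonicalσ (g (eW w).1) c (eW w).2⟩ :=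
  ⟨Filling.graph g, Filling.graph_isProper g, Filling.graph_phi34 g, Filling.graph_connected g,
    Filling.boundaryEquiv g, Filling.boundaryEquiv g, Filling.graph_bdryAdj_iff g⟩

/-- For every `b ≥ 1` and all `g₁, …, g_b ≥ 0` there exists a connected
open Feynman graph `L` of the φ₃⁴-theory whose boundary graph `∂L` has exactly `b`
connected components, the `i`-th one isomorphic (as a vertex-bipartite edge-3-colored
graph) to the canonical genus-`g_i` graph `C_{g_i}`; i.e. `∂L` is isomorphic to the
disjoint union `C_{g₁} ⊔ ⋯ ⊔ C_{g_b}` (whose vertices on each side are indexed by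
`Σ i : Fin b, ZMod (2 gᵢ + 1)` and whose color-`c` edges are given componentwise by
`canonicalσ`). -/
theorem phi34_boundary_sector_complete (b : ℕ) (hb : 1 ≤ b) (g : Fin b → ℕ) :
    ∃ L : OGraph 3, L.IsProper ∧ L.Phi34 ∧ L.Connected ∧
      ∃ (eW : {w : L.W // w ∉ L.W₀} ≃ Σ i : Fin b, ZMod (2 * g i + 1))
        (eB : {v : L.B // v ∉ L.B₀} ≃ Σ i : Fin b, ZMod (2 * g i + 1)),
        ∀ (c : Fin 3) (w : {w : L.W // w ∉ L.W₀}) (v : {v : L.B // v ∉ L.B₀}),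
          L.BdryAdj c w.1 v.1 ↔
            eB v = ⟨(eW w).1, canonicalσ (g (eW w).1) c (eW w).2⟩ :=
  phi34_boundary_sector_complete_general b g
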